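/- Let X be an ℝ^d-valued random vector, α ∈ (0,2), k ≥ 0, and suppose lim_{ρ→∞} ρ^α (ln ρ)^{−k} E[1_{|X|≥ρz} f(X/|X|)] = z^{−α} ∫_{S^{d−1}} f(s) ν(ds) for all z > 0 and all bounded continuous f on S^{d−1}, where ν is a finite nonnegative measure. Then for every δ > 0 and every bounded continuous W on ℝ^d with |W(x)| ≤ C|x|²/(1+|x|²), the small-ball contribution satisfies limsup_{ρ→∞} ρ^α (ln ρ)^{−k} E[W(X/ρ) 1_{|X|≤δρ}] ≤ C' δ^{2−α} for a constant C' independent of δ. -/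

import Mathlib

/-!
Write `L ρ = ρ ^ α * (log ρ) ^ (-k)`. Testing the tail hypothesis against `f = 1`, `z = 1` gives
`P(‖X‖ ≥ r) ≤ B / L r` for all large `r`. On the ball `‖X‖ ≤ δ ρ` we have
`|W (X / ρ)| ≤ C min (‖X‖² / ρ², m)` with `m = min (δ², 1)`, and by the layer-cake formula the
expectation of the right-hand side is `C ∫₀^m P(‖X‖ ≥ ρ √t) dt`. For `t ≤ (ρ₀ / ρ)²` the integrand
is bounded by `1`, a contribution `O(ρ⁻²)` that stays negligible after multiplication by `L ρ`
because `α < 2`. For larger `t` the tail bound and `(log (ρ √t)) ^ k ≤ (log ρ) ^ k` give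
`B t ^ (-α/2) / L ρ`, which is integrable near `0` exactly because `α < 2`, with integral
`B m ^ (1 - α/2) / ((1 - α/2) L ρ)`; finally `m ^ (1 - α/2) ≤ δ ^ (2 - α)`.
-/

open MeasureTheory Filter Real Set Topology

lemma inv_rpow_mul_log_rpow_neg {ρ : ℝ} (hρ : 1 < ρ) (α k : ℝ) :
    (ρ ^ α * log ρ ^ (-k))⁻¹ = ρ ^ (-α) * log ρ ^ k := by
  rw [mul_inv, ← rpow_neg (by linarith), ← rpow_neg (log_pos hρ).le, neg_neg]

lemma rpow_neg_mul_log_rpow_nonneg {r : ℝ} (hr : 1 ≤ r) (α k : ℝ) :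
    0 ≤ r ^ (-α) * log r ^ k :=
  mul_nonneg (rpow_nonneg (by linarith) _) (rpow_nonneg (log_nonneg hr) _)

lemma tendsto_rpow_mul_log_rpow_neg_div_sq {α k : ℝ} (hα : α < 2) (hk : 0 ≤ k) :
    Tendsto (fun ρ => ρ ^ α * log ρ ^ (-k) / ρ ^ 2) atTop (𝓝 0) := by
  refine squeeze_zero' ?_ ?_ (tendsto_rpow_neg_atTop (y := 2 - α) (by linarith))
  · filter_upwards [eventually_ge_atTop 1] with ρ hρ
    have := rpow_nonneg (log_nonneg hρ) (-k)
    positivity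
  · filter_upwards [eventually_ge_atTop (exp 1)] with ρ hρ
    have hρ₀ : 0 < ρ := (exp_pos 1).trans_le hρ
    have hlog : log ρ ^ (-k) ≤ 1 :=
      rpow_le_one_of_one_le_of_nonpos ((le_log_iff_exp_le hρ₀).2 hρ) (by linarith)
    calc ρ ^ α * log ρ ^ (-k) / ρ ^ 2 ≤ ρ ^ α * 1 / ρ ^ 2 := by gcongr
      _ = ρ ^ (-(2 - α)) := by rw [mul_one, ← rpow_two, ← rpow_sub hρ₀]; ring_nf

lemma limsup_le_of_abs_le_of_tendsto {ι : Type*} {l : Filter ι} [l.NeBot] {f g : ι → ℝ}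
    {a : ℝ} (hfg : ∀ᶠ x in l, |f x| ≤ g x) (hg : Tendsto g l (𝓝 a)) : limsup f l ≤ a := by
  have hcobdd : l.IsCoboundedUnder (· ≤ ·) f := by
    refine isCoboundedUnder_le_of_eventually_le l (x := -(a + 1)) ?_
    filter_upwards [hfg, hg.eventually (eventually_le_nhds (lt_add_one a))] with x hf hg
    linarith [neg_abs_le (f x)]
  exact (limsup_le_limsup (hfg.mono fun x h => (le_abs_self _).trans h) hcobdd
    hg.isBoundedUnder_le).trans_eq hg.limsup_eq

lemma min_sq_one_rpow_half_le {δ p : ℝ} (hδ : 0 ≤ δ) (hp : 0 ≤ p) :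
    min (δ ^ 2) 1 ^ (p / 2) ≤ δ ^ p := by
  calc min (δ ^ 2) 1 ^ (p / 2) ≤ (δ ^ 2) ^ (p / 2) :=
        rpow_le_rpow (by positivity) (min_le_left _ _) (by positivity)
    _ = δ ^ p := by rw [← rpow_two, ← rpow_mul hδ]; ring_nf

lemma abs_le_max_mul_min_sq_one {E : Type*} [SeminormedAddCommGroup E] {W : E → ℝ} {C : ℝ}
    (hW : ∀ x, |W x| ≤ C * ‖x‖ ^ 2 / (1 + ‖x‖ ^ 2)) (x : E) :
    |W x| ≤ max C 0 * min (‖x‖ ^ 2) 1 := by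
  have hdiv : ‖x‖ ^ 2 / (1 + ‖x‖ ^ 2) ≤ min (‖x‖ ^ 2) 1 :=
    le_min (div_le_self (by positivity) (by linarith [sq_nonneg ‖x‖]))
      ((div_le_one (by positivity)).2 (by linarith))
  calc |W x| ≤ C * (‖x‖ ^ 2 / (1 + ‖x‖ ^ 2)) := mul_div_assoc C _ _ ▸ hW x
    _ ≤ max C 0 * (‖x‖ ^ 2 / (1 + ‖x‖ ^ 2)) := by gcongr; exact le_max_left C 0
    _ ≤ max C 0 * min (‖x‖ ^ 2) 1 := by gcongr

lemma lintegral_Ioc_ofReal_mul_rpow_neg {β K M : ℝ} (hβ : β < 1) (hK : 0 ≤ K) (hM : 0 ≤ M) :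
    ∫⁻ t in Ioc 0 M, ENNReal.ofReal (K * t ^ (-β))
      = ENNReal.ofReal (K * (M ^ (1 - β) / (1 - β))) := by
  have hint : IntegrableOn (fun t : ℝ => t ^ (-β)) (Ioc 0 M) :=
    (intervalIntegral.intervalIntegrable_rpow' (by linarith)).1
  rw [← ofReal_integral_eq_lintegral_ofReal (hint.const_mul K), integral_const_mul,
    ← intervalIntegral.integral_of_le hM, integral_rpow (Or.inl (by linarith)),
    zero_rpow (by linarith), neg_add_eq_sub, sub_zero]
  filter_upwards [ae_restrict_mem measurableSet_Ioc] with t ht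
  exact mul_nonneg hK (rpow_nonneg ht.1.le _)

lemma exists_le_rpow_neg_mul_log_rpow_of_tendsto {g : ℝ → ℝ} {α k a : ℝ}
    (h : Tendsto (fun ρ => ρ ^ α * log ρ ^ (-k) * g ρ) atTop (𝓝 a)) :
    ∃ ρ₀, 1 < ρ₀ ∧ ∀ r, ρ₀ ≤ r → g r ≤ (a + 1) * (r ^ (-α) * log r ^ k) := by
  obtain ⟨ρ₀, hρ₀⟩ := eventually_atTop.1
    ((eventually_gt_atTop 1).and (h.eventually (eventually_le_nhds (lt_add_one a))))
  refine ⟨ρ₀, (hρ₀ ρ₀ le_rfl).1, fun r hr => ?_⟩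
  obtain ⟨hr₁, hle⟩ := hρ₀ r hr
  have hpos : 0 < r ^ α * log r ^ (-k) :=
    mul_pos (rpow_pos_of_pos (by linarith) _) (rpow_pos_of_pos (log_pos hr₁) _)
  rw [← inv_rpow_mul_log_rpow_neg hr₁, ← div_eq_mul_inv, le_div_iff₀ hpos, mul_comm]
  exact hle

section Moments

variable {Ω : Type*} [MeasurableSpace Ω] {μ : Measure Ω} [IsProbabilityMeasure μ]

lemma integral_le_of_meas_le_mul_rpow_neg {Y : Ω → ℝ} (hY : Measurable Y)
    (hY₀ : ∀ ω, 0 ≤ Y ω) {M c K β : ℝ} (hYM : ∀ ω, Y ω ≤ M)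
    (hc : 0 ≤ c) (hM : 0 ≤ M) (hK : 0 ≤ K) (hβ : β < 1)
    (htail : ∀ t ∈ Ioc c M, μ {ω | t ≤ Y ω} ≤ ENNReal.ofReal (K * t ^ (-β))) :
    ∫ ω, Y ω ∂μ ≤ c + K * (M ^ (1 - β) / (1 - β)) := by
  have hlayer : ∫⁻ t in Ioi 0, μ {ω | t ≤ Y ω}
      ≤ ENNReal.ofReal c + ENNReal.ofReal (K * (M ^ (1 - β) / (1 - β))) := by
    have hsplit : Ioi (0 : ℝ) ⊆ Ioc 0 c ∪ Ioc c M ∪ Ioi M := fun t ht => by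
      simp only [mem_union, mem_Ioc, mem_Ioi] at ht ⊢
      grind
    calc ∫⁻ t in Ioi 0, μ {ω | t ≤ Y ω}
        ≤ (∫⁻ t in Ioc 0 c, μ {ω | t ≤ Y ω}) + (∫⁻ t in Ioc c M, μ {ω | t ≤ Y ω})
            + ∫⁻ t in Ioi M, μ {ω | t ≤ Y ω} :=
          (lintegral_mono_set hsplit).trans <| (lintegral_union_le _ _ _).trans <|
            add_le_add_left (lintegral_union_le _ _ _) _
      _ ≤ (∫⁻ t in Ioc 0 c, 1) + (∫⁻ t in Ioc 0 M, ENNReal.ofReal (K * t ^ (-β))) + 0 := by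
          gcongr ?_ + ?_ + ?_
          · exact lintegral_mono fun t => prob_le_one
          · exact (setLIntegral_mono' measurableSet_Ioc htail).trans
              (lintegral_mono_set (Ioc_subset_Ioc_left hc))
          · refine (setLIntegral_mono' measurableSet_Ioi fun t ht => ?_).trans_eq lintegral_zero
            rw [nonpos_iff_eq_zero, ← measure_empty (μ := μ)]
            exact congrArg μ
              (eq_empty_of_forall_notMem fun ω hω => (hYM ω).not_gt (ht.trans_le hω))
      _ = _ := by
          rw [setLIntegral_one, Real.volume_Ioc, sub_zero, add_zero,
            lintegral_Ioc_ofReal_mul_rpow_neg hβ hK hM]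
  rw [integral_eq_lintegral_of_nonneg_ae (ae_of_all _ hY₀) hY.aestronglyMeasurable,
    lintegral_eq_lintegral_meas_le μ (ae_of_all _ hY₀) hY.aemeasurable]
  refine (ENNReal.toReal_mono (by finiteness) hlayer).trans_eq ?_
  rw [ENNReal.toReal_add (by finiteness) (by finiteness), ENNReal.toReal_ofReal hc,
    ENNReal.toReal_ofReal]
  have : 0 ≤ M ^ (1 - β) := rpow_nonneg hM _
  have : 0 < 1 - β := by linarith
  positivity

lemma integral_min_sq_div_le {R : Ω → ℝ} (hR : Measurable R)
    (hR₀ : ∀ ω, 0 ≤ R ω) {α k B ρ₀ ρ m : ℝ} (hα : α < 2) (hk : 0 ≤ k) (hB : 0 ≤ B)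
    (hρ₀ : 1 ≤ ρ₀) (hρ : ρ₀ ≤ ρ) (hm₀ : 0 ≤ m) (hm₁ : m ≤ 1)
    (htail : ∀ r, ρ₀ ≤ r → μ.real {ω | r ≤ R ω} ≤ B * (r ^ (-α) * log r ^ k)) :
    ∫ ω, min ((R ω / ρ) ^ 2) m ∂μ
      ≤ (ρ₀ / ρ) ^ 2 + B * (ρ ^ (-α) * log ρ ^ k) * (m ^ (1 - α / 2) / (1 - α / 2)) := by
  have hρpos : 0 < ρ := by linarith
  have hK : 0 ≤ B * (ρ ^ (-α) * log ρ ^ k) :=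
    mul_nonneg hB (rpow_neg_mul_log_rpow_nonneg (by linarith) α k)
  refine integral_le_of_meas_le_mul_rpow_neg (by fun_prop) (fun ω => by positivity)
    (fun ω => min_le_right _ _) (by positivity) hm₀ hK (by linarith)
    fun t ⟨hct, htm⟩ => ?_
  have ht₀ : 0 < t := (sq_nonneg _).trans_lt hct
  set r := ρ * √t with hr
  have hρ₀r : ρ₀ ≤ r := by
    have : ρ₀ / ρ < √t := lt_sqrt_of_sq_lt hct
    rw [div_lt_iff₀ hρpos] at this
    linarith
  have hrρ : r ≤ ρ := mul_le_of_le_one_right hρpos.le (sqrt_le_one.2 (htm.trans hm₁))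
  have hsub : {ω | t ≤ min ((R ω / ρ) ^ 2) m} ⊆ {ω | r ≤ R ω} := fun ω hω => by
    have : √t ≤ R ω / ρ :=
      (sqrt_le_left (div_nonneg (hR₀ ω) hρpos.le)).2 (hω.trans (min_le_left _ _))
    rwa [le_div_iff₀ hρpos, mul_comm] at this
  have hpow : r ^ (-α) = ρ ^ (-α) * t ^ (-(α / 2)) := by
    rw [hr, mul_rpow hρpos.le (sqrt_nonneg t), sqrt_eq_rpow, ← rpow_mul ht₀.le]
    ring_nf
  have hlog : log r ^ k ≤ log ρ ^ k :=
    rpow_le_rpow (log_nonneg (by linarith)) (log_le_log (by linarith) hrρ) hk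
  calc μ {ω | t ≤ min ((R ω / ρ) ^ 2) m} ≤ μ {ω | r ≤ R ω} := measure_mono hsub
    _ ≤ ENNReal.ofReal (B * (r ^ (-α) * log r ^ k)) :=
        (ENNReal.le_ofReal_iff_toReal_le (measure_ne_top _ _)
          (mul_nonneg hB (rpow_neg_mul_log_rpow_nonneg (by linarith) α k))).2 (htail r hρ₀r)
    _ ≤ ENNReal.ofReal (B * (ρ ^ (-α) * log ρ ^ k) * t ^ (-(α / 2))) := by
        gcongr ENNReal.ofReal ?_
        calc B * (r ^ (-α) * log r ^ k) = B * (ρ ^ (-α) * t ^ (-(α / 2)) * log r ^ k) := by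
              rw [hpow]
          _ ≤ B * (ρ ^ (-α) * t ^ (-(α / 2)) * log ρ ^ k) := by gcongr
          _ = B * (ρ ^ (-α) * log ρ ^ k) * t ^ (-(α / 2)) := by ring

end Moments

section SmallBall

variable {Ω E : Type*} [MeasurableSpace Ω] {μ : Measure Ω} [NormedAddCommGroup E]
  [NormedSpace ℝ E] [MeasurableSpace E] [OpensMeasurableSpace E] {X : Ω → E}

lemma abs_setIntegral_le_integral_min_sq [IsFiniteMeasure μ] (hX : Measurable X) {W : E → ℝ}
    {C δ ρ : ℝ} (hC : 0 ≤ C) (hW : ∀ x, |W x| ≤ C * min (‖x‖ ^ 2) 1) (hρ : 0 < ρ) :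
    |∫ ω in {ω | ‖X ω‖ ≤ δ * ρ}, W (ρ⁻¹ • X ω) ∂μ|
      ≤ C * ∫ ω, min ((‖X ω‖ / ρ) ^ 2) (min (δ ^ 2) 1) ∂μ := by
  have hint : Integrable (fun ω => C * min ((‖X ω‖ / ρ) ^ 2) (min (δ ^ 2) 1)) μ := by
    have hmeas : Measurable fun ω => C * min ((‖X ω‖ / ρ) ^ 2) (min (δ ^ 2) 1) := by
      fun_prop
    refine Integrable.of_bound hmeas.aestronglyMeasurable C (ae_of_all _ fun ω => ?_)
    rw [norm_mul, Real.norm_of_nonneg hC, Real.norm_of_nonneg (by positivity)]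
    exact mul_le_of_le_one_right hC ((min_le_right _ _).trans (min_le_right _ _))
  have hpt : ∀ ω ∈ {ω | ‖X ω‖ ≤ δ * ρ},
      ‖W (ρ⁻¹ • X ω)‖ ≤ C * min ((‖X ω‖ / ρ) ^ 2) (min (δ ^ 2) 1) := fun ω hω => by
    have hsq : (‖X ω‖ / ρ) ^ 2 ≤ δ ^ 2 :=
      pow_le_pow_left₀ (by positivity) ((div_le_iff₀ hρ).2 hω) 2
    calc ‖W (ρ⁻¹ • X ω)‖ ≤ C * min (‖ρ⁻¹ • X ω‖ ^ 2) 1 := hW _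
      _ = C * min ((‖X ω‖ / ρ) ^ 2) (min (δ ^ 2) 1) := by
        rw [norm_smul, norm_inv, Real.norm_of_nonneg hρ.le, inv_mul_eq_div, ← min_assoc,
          min_eq_left hsq]
  rw [← integral_const_mul]
  calc |∫ ω in {ω | ‖X ω‖ ≤ δ * ρ}, W (ρ⁻¹ • X ω) ∂μ|
      ≤ ∫ ω in {ω | ‖X ω‖ ≤ δ * ρ}, C * min ((‖X ω‖ / ρ) ^ 2) (min (δ ^ 2) 1) ∂μ :=
        norm_integral_le_of_norm_le hint.integrableOn
          (ae_restrict_of_forall_mem (measurableSet_le hX.norm measurable_const) hpt)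
    _ ≤ ∫ ω, C * min ((‖X ω‖ / ρ) ^ 2) (min (δ ^ 2) 1) ∂μ :=
        setIntegral_le_integral hint (ae_of_all _ fun ω => by positivity)

lemma abs_rpow_mul_log_rpow_neg_mul_setIntegral_le [IsProbabilityMeasure μ]
    (hX : Measurable X) {W : E → ℝ} {C : ℝ} (hC : 0 ≤ C) (hW : ∀ x, |W x| ≤ C * min (‖x‖ ^ 2) 1)
    {α k B ρ₀ ρ δ : ℝ} (hα : α < 2) (hk : 0 ≤ k) (hB : 0 ≤ B) (hρ₀ : 1 < ρ₀) (hρ : ρ₀ ≤ ρ)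
    (htail : ∀ r, ρ₀ ≤ r → μ.real {ω | r ≤ ‖X ω‖} ≤ B * (r ^ (-α) * log r ^ k)) :
    |ρ ^ α * log ρ ^ (-k) * ∫ ω in {ω | ‖X ω‖ ≤ δ * ρ}, W (ρ⁻¹ • X ω) ∂μ|
      ≤ C * (ρ₀ ^ 2 * (ρ ^ α * log ρ ^ (-k) / ρ ^ 2)
          + B * (min (δ ^ 2) 1 ^ (1 - α / 2) / (1 - α / 2))) := by
  have hρ₁ : 1 < ρ := hρ₀.trans_le hρ
  set L := ρ ^ α * log ρ ^ (-k)
  have hL : 0 < L :=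
    mul_pos (rpow_pos_of_pos (by linarith) _) (rpow_pos_of_pos (log_pos hρ₁) _)
  have hLinv : L * (ρ ^ (-α) * log ρ ^ k) = 1 := by
    rw [← inv_rpow_mul_log_rpow_neg hρ₁]; exact mul_inv_cancel₀ hL.ne'
  rw [abs_mul, abs_of_pos hL]
  calc L * |∫ ω in {ω | ‖X ω‖ ≤ δ * ρ}, W (ρ⁻¹ • X ω) ∂μ|
      ≤ L * (C * ∫ ω, min ((‖X ω‖ / ρ) ^ 2) (min (δ ^ 2) 1) ∂μ) := by
        gcongr; exact abs_setIntegral_le_integral_min_sq hX hC hW (by linarith)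
    _ ≤ L * (C * ((ρ₀ / ρ) ^ 2 + B * (ρ ^ (-α) * log ρ ^ k)
          * (min (δ ^ 2) 1 ^ (1 - α / 2) / (1 - α / 2)))) := by
        gcongr
        exact integral_min_sq_div_le hX.norm (fun ω => norm_nonneg _) hα hk hB hρ₀.le hρ
          (by positivity) (min_le_right _ _) htail
    _ = C * (ρ₀ ^ 2 * (L / ρ ^ 2) + B * (L * (ρ ^ (-α) * log ρ ^ k))
          * (min (δ ^ 2) 1 ^ (1 - α / 2) / (1 - α / 2))) := by ring
    _ = _ := by rw [hLinv, mul_one]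

end SmallBall

theorem small_ball_contribution_estimate_general
    {Ω : Type*} [MeasurableSpace Ω] (μ : Measure Ω) [IsProbabilityMeasure μ]
    (d : ℕ) (X : Ω → EuclideanSpace ℝ (Fin d)) (hX : Measurable X)
    (α k : ℝ) (hα₂ : α < 2) (hk : 0 ≤ k)
    (ν : Measure (EuclideanSpace ℝ (Fin d)))
    (htail : ∀ z > (0:ℝ), ∀ f : EuclideanSpace ℝ (Fin d) → ℝ, Continuous f →
      (∃ C : ℝ, ∀ x, |f x| ≤ C) →
      Tendsto (fun ρ : ℝ => ρ ^ α * (Real.log ρ) ^ (-k) *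
          ∫ ω in {ω | ρ * z ≤ ‖X ω‖}, f (‖X ω‖⁻¹ • X ω) ∂μ) atTop
        (nhds (z ^ (-α) * ∫ s, f s ∂ν))) :
    ∀ W : EuclideanSpace ℝ (Fin d) → ℝ, Continuous W →
      (∃ C : ℝ, ∀ x, |W x| ≤ C * ‖x‖ ^ 2 / (1 + ‖x‖ ^ 2)) →
      ∃ C' : ℝ, ∀ δ > (0:ℝ),
        Filter.limsup (fun ρ : ℝ => ρ ^ α * (Real.log ρ) ^ (-k) *
            ∫ ω in {ω | ‖X ω‖ ≤ δ * ρ}, W (ρ⁻¹ • X ω) ∂μ) atTop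
          ≤ C' * δ ^ (2 - α) := by
  rintro W - ⟨C₀, hW⟩
  have hmass := htail 1 one_pos (fun _ => 1) continuous_const ⟨1, fun _ => by simp⟩
  simp only [mul_one, integral_const, smul_eq_mul, one_rpow, one_mul,
    measureReal_restrict_apply_univ] at hmass
  obtain ⟨ρ₀, hρ₀, hμtail⟩ := exists_le_rpow_neg_mul_log_rpow_of_tendsto hmass
  set B := ν.real univ + 1
  set C := max C₀ 0
  refine ⟨C * B / (1 - α / 2), fun δ hδ => ?_⟩
  have hlim := ((tendsto_rpow_mul_log_rpow_neg_div_sq hα₂ hk).const_mul (ρ₀ ^ 2)).add_const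
    (B * (min (δ ^ 2) 1 ^ (1 - α / 2) / (1 - α / 2))) |>.const_mul C
  rw [mul_zero, zero_add] at hlim
  refine (limsup_le_of_abs_le_of_tendsto ?_ hlim).trans ?_
  · filter_upwards [eventually_ge_atTop ρ₀] with ρ hρ
    exact abs_rpow_mul_log_rpow_neg_mul_setIntegral_le hX (le_max_right _ _)
      (abs_le_max_mul_min_sq_one hW) hα₂ hk (by positivity) hρ₀ hρ hμtail
  · have hδα := min_sq_one_rpow_half_le hδ.le (p := 2 - α) (by linarith)
    rw [show (2 - α) / 2 = 1 - α / 2 by ring] at hδα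
    have : 0 < 1 - α / 2 := by linarith
    calc C * (B * (min (δ ^ 2) 1 ^ (1 - α / 2) / (1 - α / 2)))
        = C * B / (1 - α / 2) * min (δ ^ 2) 1 ^ (1 - α / 2) := by ring
      _ ≤ C * B / (1 - α / 2) * δ ^ (2 - α) := by gcongr

theorem small_ball_contribution_estimate
    {Ω : Type*} [MeasurableSpace Ω] (μ : Measure Ω) [IsProbabilityMeasure μ]
    (d : ℕ) (X : Ω → EuclideanSpace ℝ (Fin d)) (hX : Measurable X)
    (α k : ℝ) (hα₀ : 0 < α) (hα₂ : α < 2) (hk : 0 ≤ k)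
    (ν : Measure (EuclideanSpace ℝ (Fin d))) [IsFiniteMeasure ν]
    (htail : ∀ z > (0:ℝ), ∀ f : EuclideanSpace ℝ (Fin d) → ℝ, Continuous f →
      (∃ C : ℝ, ∀ x, |f x| ≤ C) →
      Tendsto (fun ρ : ℝ => ρ ^ α * (Real.log ρ) ^ (-k) *
          ∫ ω in {ω | ρ * z ≤ ‖X ω‖}, f (‖X ω‖⁻¹ • X ω) ∂μ) atTop
        (nhds (z ^ (-α) * ∫ s, f s ∂ν))) :
    ∀ W : EuclideanSpace ℝ (Fin d) → ℝ, Continuous W →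
      (∃ C : ℝ, ∀ x, |W x| ≤ C * ‖x‖ ^ 2 / (1 + ‖x‖ ^ 2)) →
      ∃ C' : ℝ, ∀ δ > (0:ℝ),
        Filter.limsup (fun ρ : ℝ => ρ ^ α * (Real.log ρ) ^ (-k) *
            ∫ ω in {ω | ‖X ω‖ ≤ δ * ρ}, W (ρ⁻¹ • X ω) ∂μ) atTop
          ≤ C' * δ ^ (2 - α) :=
  small_ball_contribution_estimate_general μ d X hX α k hα₂ hk ν htail
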